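/- arXiv:1308.5884 — 2 statements merged into one kernel-verified Lean document; each statement's English description precedes it below -/
import Mathlib

section
/- For positive semidefinite operators ρ, σ on a finite-dimensional Hilbert space and any orthogonal projector Π, the trace norm identities ‖√(ΠρΠ) √σ‖₁ = ‖√ρ √(ΠσΠ)‖₁ = ‖√(ΠρΠ) √(ΠσΠ)‖₁ hold. -/
/-!
The trace norm `‖X‖₁ = tr √(X†X)` depends only on `X†X`, and also only on `XX†`, since `X†X` and
`XX†` have the same nonzero spectrum. Put `A = √(ΠρΠ)` and `B = √(ΠσΠ)`. Since `(A - AΠ)†(A - AΠ)`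
vanishes, `AΠ = A = ΠA`, and likewise for `B`. Hence `(A√σ)(A√σ)† = AσA = AΠσΠA = (AB)(AB)†` and
`(√ρ B)†(√ρ B) = BρB = BΠρΠB = (AB)†(AB)`.
-/

open scoped ComplexOrder Kronecker
open Matrix Classical

noncomputable def msqrt {n : Type*} [Fintype n] [DecidableEq n] (A : Matrix n n ℂ) :
    Matrix n n ℂ :=
  if h : A.PosSemidef then
    h.1.eigenvectorUnitary.1 * diagonal ((↑) ∘ (√·) ∘ h.1.eigenvalues) *
      (star h.1.eigenvectorUnitary : Matrix n n ℂ) else 0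

noncomputable def traceNorm {n : Type*} [Fintype n] [DecidableEq n] (A : Matrix n n ℂ) : ℝ :=
  (msqrt (Aᴴ * A)).trace.re

noncomputable def fid {n : Type*} [Fintype n] [DecidableEq n] (ρ σ : Matrix n n ℂ) : ℝ :=
  traceNorm (msqrt ρ * msqrt σ) + Real.sqrt ((1 - ρ.trace.re) * (1 - σ.trace.re))

noncomputable def pdist {n : Type*} [Fintype n] [DecidableEq n] (ρ σ : Matrix n n ℂ) : ℝ :=
  Real.sqrt (1 - (fid ρ σ) ^ 2)

/-- Loewner order: `A ≤ B` iff `B - A` is positive semidefinite. -/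
def loewnerLE {n : Type*} [Fintype n] (A B : Matrix n n ℂ) : Prop := (B - A).PosSemidef

/-- Max-relative entropy `D_max(ρ‖σ) = min {λ : ρ ≤ 2^λ σ}`. -/
noncomputable def Dmax {n : Type*} [Fintype n] (ρ σ : Matrix n n ℂ) : ℝ :=
  sInf {l : ℝ | loewnerLE ρ (((2 : ℝ) ^ l) • σ)}

def Subnormalized {n : Type*} [Fintype n] (ρ : Matrix n n ℂ) : Prop :=
  ρ.PosSemidef ∧ 0 < ρ.trace.re ∧ ρ.trace.re ≤ 1

def IsDensity {n : Type*} [Fintype n] (ρ : Matrix n n ℂ) : Prop :=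
  ρ.PosSemidef ∧ ρ.trace = 1

open Polynomial

namespace Matrix

variable {n : Type*} [Fintype n]

lemma mul_conjugate_mul_conjTranspose_of_mul_eq {R : Type*} [Semiring R] [StarRing R]
    {X P : Matrix n n R} (hP : P.IsHermitian) (hX : X * P = X) (M : Matrix n n R) :
    X * (P * M * P) * Xᴴ = X * M * Xᴴ := by
  conv_rhs => rw [← hX, conjTranspose_mul, hP.eq]
  simp only [mul_assoc]

lemma PosSemidef.conjugate_of_isHermitian {𝕜 : Type*} [RCLike 𝕜] {A P : Matrix n n 𝕜}
    (hA : A.PosSemidef) (hP : P.IsHermitian) : (P * A * P).PosSemidef := by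
  simpa only [hP.eq] using hA.mul_mul_conjTranspose_same P

variable [DecidableEq n]

lemma trace_mul_pow_comm {R : Type*} [CommSemiring R] (Y Z : Matrix n n R) (k : ℕ) :
    ((Y * Z) ^ k).trace = ((Z * Y) ^ k).trace := by
  cases k with
  | zero => rfl
  | succ k => rw [pow_succ', mul_assoc, ← mul_pow_mul, trace_mul_comm, mul_assoc, ← pow_succ]

lemma trace_aeval_mul_comm {R S : Type*} [CommSemiring R] [CommSemiring S] [Algebra R S]
    (Y Z : Matrix n n S) (p : R[X]) :
    (aeval (Y * Z) p).trace = (aeval (Z * Y) p).trace := by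
  simp only [aeval_eq_sum_range, trace_sum, trace_smul, trace_mul_pow_comm Y Z]

variable {𝕜 : Type*} [RCLike 𝕜]

/-- On the finite set `spectrum (YZ) ∪ spectrum (ZY)`, `f` agrees with a polynomial `p`, and
`tr p(YZ) = tr p(ZY)`. -/
lemma trace_cfc_mul_comm {Y Z : Matrix n n 𝕜} (hYZ : IsSelfAdjoint (Y * Z))
    (hZY : IsSelfAdjoint (Z * Y)) (f : ℝ → ℝ) :
    (cfc f (Y * Z)).trace = (cfc f (Z * Y)).trace := by
  set s := ((Y * Z).finite_real_spectrum.union (Z * Y).finite_real_spectrum).toFinset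
  set p := Lagrange.interpolate s id f
  have hp : ∀ x ∈ s, p.eval x = f x := fun x hx =>
    Lagrange.eval_interpolate_at_node f Function.injective_id.injOn hx
  have hYZ' : cfc f (Y * Z) = aeval (Y * Z) p := by
    rw [← cfc_polynomial p (Y * Z)]
    exact cfc_congr fun x hx => (hp x (by simp [s, hx])).symm
  have hZY' : cfc f (Z * Y) = aeval (Z * Y) p := by
    rw [← cfc_polynomial p (Z * Y)]
    exact cfc_congr fun x hx => (hp x (by simp [s, hx])).symm
  rw [hYZ', hZY', trace_aeval_mul_comm]

lemma IsHermitian.mul_eq_self_of_mul_self_mul_eq {S P : Matrix n n 𝕜} (hS : S.IsHermitian)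
    (hP : P.IsHermitian) (h : S * S * P = S * S) : S * P = S := by
  have hPSS : P * (S * S) = S * S := by
    simpa [conjTranspose_mul, hS.eq, hP.eq, mul_assoc] using congrArg (·ᴴ) h
  have : (S - S * P)ᴴ * (S - S * P) = 0 :=
    calc (S - S * P)ᴴ * (S - S * P) = (S - P * S) * (S - S * P) := by
          rw [conjTranspose_sub, conjTranspose_mul, hS.eq, hP.eq]
      _ = S * S - S * S * P - P * (S * S) + P * (S * S) * P := by noncomm_ring
      _ = 0 := by rw [hPSS, h, sub_self, zero_sub, neg_add_cancel]
  exact (sub_eq_zero.mp (conjTranspose_mul_self_eq_zero.mp this)).symm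

end Matrix

section MatrixOrder

open scoped MatrixOrder

variable {n : Type*} [Fintype n] [DecidableEq n]

lemma msqrt_eq_sqrt (A : Matrix n n ℂ) : msqrt A = CFC.sqrt A := by
  by_cases hA : A.PosSemidef
  · rw [msqrt, dif_pos hA, CFC.sqrt_eq_real_sqrt A hA.nonneg, cfcₙ_eq_cfc, hA.1.cfc_eq]
    rfl
  · rw [msqrt, dif_neg hA, CFC.sqrt, cfcₙ_apply_of_not_predicate]
    rwa [nonneg_iff_posSemidef]

lemma isHermitian_msqrt (A : Matrix n n ℂ) : (msqrt A).IsHermitian := by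
  rw [msqrt_eq_sqrt]
  exact (CFC.sqrt_nonneg A).isSelfAdjoint.isHermitian

lemma Matrix.PosSemidef.msqrt_mul_self {A : Matrix n n ℂ} (hA : A.PosSemidef) :
    msqrt A * msqrt A = A := by
  rw [msqrt_eq_sqrt, CFC.sqrt_mul_sqrt_self A hA.nonneg]

lemma traceNorm_conjTranspose (X : Matrix n n ℂ) : traceNorm Xᴴ = traceNorm X := by
  have hX : 0 ≤ Xᴴ * X := (posSemidef_conjTranspose_mul_self X).nonneg
  have hX' : 0 ≤ X * Xᴴ := (posSemidef_self_mul_conjTranspose X).nonneg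
  rw [traceNorm, traceNorm, conjTranspose_conjTranspose, msqrt_eq_sqrt, msqrt_eq_sqrt,
    CFC.sqrt_eq_real_sqrt _ hX, CFC.sqrt_eq_real_sqrt _ hX', cfcₙ_eq_cfc, cfcₙ_eq_cfc,
    trace_cfc_mul_comm hX'.isSelfAdjoint hX.isSelfAdjoint]

end MatrixOrder

section msqrt

variable {n : Type*} [Fintype n] [DecidableEq n]

lemma mul_msqrt_mul_conjTranspose_self (X : Matrix n n ℂ) {M : Matrix n n ℂ}
    (hM : M.PosSemidef) : X * msqrt M * (X * msqrt M)ᴴ = X * M * Xᴴ := by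
  rw [conjTranspose_mul, (isHermitian_msqrt M).eq, mul_assoc, ← mul_assoc (msqrt M),
    hM.msqrt_mul_self, mul_assoc]

lemma conjTranspose_mul_self_msqrt_mul (X : Matrix n n ℂ) {M : Matrix n n ℂ}
    (hM : M.PosSemidef) : (msqrt M * X)ᴴ * (msqrt M * X) = Xᴴ * M * X := by
  rw [conjTranspose_mul, (isHermitian_msqrt M).eq, mul_assoc, ← mul_assoc (msqrt M),
    hM.msqrt_mul_self, mul_assoc]

lemma msqrt_conjugate_mul_eq_self {A P : Matrix n n ℂ} (hA : A.PosSemidef) (hP : P.IsHermitian)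
    (hP2 : P * P = P) : msqrt (P * A * P) * P = msqrt (P * A * P) := by
  refine (isHermitian_msqrt _).mul_eq_self_of_mul_self_mul_eq hP ?_
  rw [(hA.conjugate_of_isHermitian hP).msqrt_mul_self, mul_assoc, hP2]

lemma traceNorm_eq_of_conjTranspose_mul_self_eq {X Y : Matrix n n ℂ} (h : Xᴴ * X = Yᴴ * Y) :
    traceNorm X = traceNorm Y := by
  rw [traceNorm, traceNorm, h]

lemma traceNorm_eq_of_mul_conjTranspose_self_eq {X Y : Matrix n n ℂ} (h : X * Xᴴ = Y * Yᴴ) :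
    traceNorm X = traceNorm Y := by
  rw [← traceNorm_conjTranspose X, ← traceNorm_conjTranspose Y]
  exact traceNorm_eq_of_conjTranspose_mul_self_eq (by simpa only [conjTranspose_conjTranspose])

end msqrt

theorem stmt5 {n : Type*} [Fintype n] [DecidableEq n] (ρ σ P : Matrix n n ℂ)
    (hρ : ρ.PosSemidef) (hσ : σ.PosSemidef) (hP : Pᴴ = P) (hP2 : P * P = P) :
    traceNorm (msqrt (P * ρ * P) * msqrt σ) = traceNorm (msqrt ρ * msqrt (P * σ * P)) ∧
    traceNorm (msqrt (P * ρ * P) * msqrt σ) =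
      traceNorm (msqrt (P * ρ * P) * msqrt (P * σ * P)) := by
  replace hP : P.IsHermitian := hP
  set A := msqrt (P * ρ * P)
  set B := msqrt (P * σ * P)
  have hAP : A * P = A := msqrt_conjugate_mul_eq_self hρ hP hP2
  have hBP : Bᴴ * P = Bᴴ := by
    rw [(isHermitian_msqrt _).eq]
    exact msqrt_conjugate_mul_eq_self hσ hP hP2
  have hleft : traceNorm (A * msqrt σ) = traceNorm (A * B) := by
    refine traceNorm_eq_of_mul_conjTranspose_self_eq ?_
    rw [mul_msqrt_mul_conjTranspose_self A hσ,
      mul_msqrt_mul_conjTranspose_self A (hσ.conjugate_of_isHermitian hP),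
      mul_conjugate_mul_conjTranspose_of_mul_eq hP hAP]
  have hright : traceNorm (msqrt ρ * B) = traceNorm (A * B) := by
    refine traceNorm_eq_of_conjTranspose_mul_self_eq ?_
    rw [conjTranspose_mul_self_msqrt_mul B hρ,
      conjTranspose_mul_self_msqrt_mul B (hρ.conjugate_of_isHermitian hP)]
    simpa only [conjTranspose_conjTranspose] using
      (mul_conjugate_mul_conjTranspose_of_mul_eq hP hBP ρ).symm
  exact ⟨hleft.trans hright.symm, hleft⟩
end

section
/- For a subnormalized state ρ and an operator Π with 0 ≤ Π ≤ I on a finite-dimensional Hilbert space, the purified distance satisfies P(ρ, ΠρΠ) ≤ (1/√(tr ρ)) · √((tr ρ)² − (tr(Π² ρ))²). -/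
open scoped ComplexOrder Kronecker
open Matrix Classical

/-!
The fidelity term is computed exactly: with `R = √ρ`, `S = √(ΠρΠ)` one has
`(RS)(RS)ᴴ = (RΠR)²` and `RΠR ≥ 0`, so `‖√ρ √(ΠρΠ)‖₁ = tr (RΠR) = tr (Πρ)`. Since `Π² ≤ Π ≤ 1`,
`s := tr (Π²ρ)` satisfies `0 ≤ s ≤ tr (Πρ)` and `s ≤ t := tr ρ`, hence
`F(ρ, ΠρΠ) ≥ s + √((1 - t)(1 - s))`, and the bound becomes an inequality between real numbers.
-/

open scoped MatrixOrder

section LoewnerOrder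

variable {n 𝕜 : Type*} [Fintype n] [RCLike 𝕜]

theorem Matrix.trace_mul_nonneg {A B : Matrix n n 𝕜} (hA : 0 ≤ A) (hB : 0 ≤ B) :
    0 ≤ (A * B).trace := by
  have hconj : 0 ≤ CFC.sqrt B * A * CFC.sqrt B :=
    conjugate_nonneg_of_nonneg hA (CFC.sqrt_nonneg B)
  rw [trace_mul_comm, ← CFC.sqrt_mul_sqrt_self B hB, mul_assoc, trace_mul_comm]
  simpa [mul_assoc] using hconj.posSemidef.trace_nonneg

theorem Matrix.trace_mul_re_le_trace_mul_re {A B C : Matrix n n 𝕜} (hAB : A ≤ B) (hC : 0 ≤ C) :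
    RCLike.re (A * C).trace ≤ RCLike.re (B * C).trace := by
  have := RCLike.nonneg_iff.mp (trace_mul_nonneg (sub_nonneg.mpr hAB) hC)
  simpa [sub_mul, trace_sub] using this.1

theorem Matrix.mul_self_le_self [DecidableEq n] {P : Matrix n n 𝕜} (h0 : 0 ≤ P) (h1 : P ≤ 1) :
    P * P ≤ P := by
  have h := conjugate_le_conjugate_of_nonneg h1 (CFC.sqrt_nonneg P)
  have hsq := CFC.sqrt_mul_sqrt_self P h0
  rwa [mul_one, hsq, show CFC.sqrt P * P * CFC.sqrt P = P * P by
    conv_lhs => rw [← hsq]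
    rw [← mul_assoc, hsq, mul_assoc, hsq]] at h

end LoewnerOrder

section Msqrt

variable {n : Type*} [Fintype n] [DecidableEq n]

theorem msqrt_eq_cfcSqrt {A : Matrix n n ℂ} (hA : A.PosSemidef) : msqrt A = CFC.sqrt A := by
  rw [msqrt, dif_pos hA, CFC.sqrt_eq_cfc, cfc_nnreal_eq_real _ A, hA.1.cfc_eq]
  simp only [Matrix.IsHermitian.cfc, Unitary.conjStarAlgAut_apply]
  congr 3
  funext i
  simp [Real.coe_sqrt, Real.coe_toNNReal', max_eq_left (hA.eigenvalues_nonneg i)]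

theorem trace_msqrt {A : Matrix n n ℂ} (hA : A.PosSemidef) :
    (msqrt A).trace = ∑ i, ((√(hA.1.eigenvalues i) : ℝ) : ℂ) := by
  rw [msqrt, dif_pos hA, Matrix.trace_mul_cycle, Unitary.coe_star_mul_self, Matrix.one_mul,
    Matrix.trace_diagonal]
  rfl

theorem trace_msqrt_eq_of_charpoly_eq {A B : Matrix n n ℂ} (hA : A.PosSemidef) (hB : B.PosSemidef)
    (h : A.charpoly = B.charpoly) : (msqrt A).trace = (msqrt B).trace := by
  rw [trace_msqrt hA, trace_msqrt hB, (hA.1.eigenvalues_eq_eigenvalues_iff hB.1).mpr h]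

theorem traceNorm_eq_re_trace_msqrt_mul_conjTranspose (M : Matrix n n ℂ) :
    traceNorm M = (msqrt (M * Mᴴ)).trace.re := by
  rw [traceNorm, trace_msqrt_eq_of_charpoly_eq (Matrix.posSemidef_conjTranspose_mul_self M)
    (Matrix.posSemidef_self_mul_conjTranspose M) (Matrix.charpoly_mul_comm _ _)]

theorem traceNorm_msqrt_mul_msqrt_conj {ρ P : Matrix n n ℂ} (hρ : 0 ≤ ρ) (hP : 0 ≤ P) :
    traceNorm (msqrt ρ * msqrt (P * ρ * P)) = (P * ρ).trace.re := by
  have hPρP : 0 ≤ P * ρ * P := conjugate_nonneg_of_nonneg hρ hP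
  set R := CFC.sqrt ρ
  set S := CFC.sqrt (P * ρ * P)
  have hRPR : 0 ≤ R * P * R := conjugate_nonneg_of_nonneg hP (CFC.sqrt_nonneg ρ)
  have hRR : R * R = ρ := CFC.sqrt_mul_sqrt_self ρ hρ
  have hsq : (R * S) * (R * S)ᴴ = (R * P * R) * (R * P * R) := by
    have hR : Rᴴ = R := (CFC.sqrt_nonneg ρ).posSemidef.1.eq
    have hS : Sᴴ = S := (CFC.sqrt_nonneg _).posSemidef.1.eq
    calc (R * S) * (R * S)ᴴ = R * (S * S) * R := by
          rw [Matrix.conjTranspose_mul, hR, hS]; noncomm_ring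
      _ = R * P * (R * R) * P * R := by rw [CFC.sqrt_mul_sqrt_self _ hPρP, hRR]; noncomm_ring
      _ = (R * P * R) * (R * P * R) := by noncomm_ring
  rw [msqrt_eq_cfcSqrt hρ.posSemidef, msqrt_eq_cfcSqrt hPρP.posSemidef,
    traceNorm_eq_re_trace_msqrt_mul_conjTranspose,
    msqrt_eq_cfcSqrt (Matrix.posSemidef_self_mul_conjTranspose _), hsq, CFC.sqrt_mul_self _ hRPR,
    Matrix.trace_mul_cycle, hRR, Matrix.trace_mul_comm]

end Msqrt

theorem sqrt_one_sub_sq_le_of_add_sqrt_le {t s f : ℝ} (ht0 : 0 < t) (ht1 : t ≤ 1) (hs0 : 0 ≤ s)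
    (hst : s ≤ t) (hf : s + √((1 - t) * (1 - s)) ≤ f) :
    √(1 - f ^ 2) ≤ (√t)⁻¹ * √(t ^ 2 - s ^ 2) := by
  set a := √((1 - t) * (1 - s))
  have ha_sq : a ^ 2 = (1 - t) * (1 - s) := Real.sq_sqrt (by nlinarith)
  have ha_ge : 1 - t ≤ a := Real.le_sqrt_of_sq_le (by nlinarith)
  have hf_sq : (s + a) ^ 2 ≤ f ^ 2 := pow_le_pow_left₀ (by positivity) hf 2
  rw [← Real.sqrt_inv, ← Real.sqrt_mul (by positivity)]
  apply Real.sqrt_le_sqrt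
  rw [inv_mul_eq_div, le_div_iff₀ ht0]
  nlinarith [mul_nonneg (mul_nonneg hs0 ht0.le) (sub_nonneg.mpr ha_ge),
    mul_nonneg (mul_nonneg hs0 (sub_nonneg.mpr ht1)) (sub_nonneg.mpr hst)]

theorem stmt7 {n : Type*} [Fintype n] [DecidableEq n] (ρ P : Matrix n n ℂ)
    (hρ : Subnormalized ρ) (hP : P.PosSemidef) (hPI : loewnerLE P 1) :
    pdist ρ (P * ρ * P) ≤
      (Real.sqrt ρ.trace.re)⁻¹ *
        Real.sqrt (ρ.trace.re ^ 2 - ((P * P * ρ).trace.re) ^ 2) := by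
  obtain ⟨hρ, ht0, ht1⟩ := hρ
  -- `loewnerLE P 1` unfolds to `P ≤ 1` in the `MatrixOrder` order.
  have hPP : P * P ≤ P := Matrix.mul_self_le_self hP.nonneg hPI
  have htrace : (P * ρ * P).trace = (P * P * ρ).trace := Matrix.trace_mul_cycle P ρ P
  have hs0 : 0 ≤ (P * P * ρ).trace.re := by
    simpa [htrace] using (RCLike.nonneg_iff.mp
      (conjugate_nonneg_of_nonneg hρ.nonneg hP.nonneg).posSemidef.trace_nonneg).1
  have hst : (P * P * ρ).trace.re ≤ ρ.trace.re := by
    simpa using Matrix.trace_mul_re_le_trace_mul_re (hPP.trans hPI) hρ.nonneg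
  have hsu := Matrix.trace_mul_re_le_trace_mul_re hPP hρ.nonneg
  rw [pdist, fid, traceNorm_msqrt_mul_msqrt_conj hρ.nonneg hP.nonneg, htrace]
  exact sqrt_one_sub_sq_le_of_add_sqrt_le ht0 ht1 hs0 hst (by simpa using hsu)
end
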